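/- For every integer n ≥ 1 and every x, p_n(x) = (x − 1) · Σ_{k=0}^{n} (−2)^{n−k} · k! · S(n,k) · (x+1)^k, where S(n,k) is the Stirling number of the second kind (so that k!·S(n,k) equals the number of surjective functions from an n-element set onto a k-element set). -/

import Mathlib

open Polynomial Finset

/-- The alternating derivative polynomials for tangent: `p 0 = X`,
`p (n+1) = (X^2 - 1) * (p n)'`. -/
noncomputable def p : ℕ → Polynomial ℝ
  | 0 => X
  | n + 1 => (X ^ 2 - 1) * derivative (p n)

/-- The alternating derivative polynomials for secant: `q 0 = 1`,
`q (n+1) = 2(X^2 - 1) * (q n)' + 2X * q n`. -/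
noncomputable def q : ℕ → Polynomial ℝ
  | 0 => 1
  | n + 1 => 2 * (X ^ 2 - 1) * derivative (q n) + 2 * X * q n

/-- The Stirling number of the second kind `S(n,k)`, defined so that
`k! * S(n,k)` is the number of surjections from `Fin n` onto `Fin k`. -/
noncomputable def stirling2 (n k : ℕ) : ℝ :=
  (Fintype.card {f : Fin n → Fin k // Function.Surjective f} : ℝ) / (k.factorial : ℝ)

/-!
For `n ≥ 1` write `p n = (X - 1) * A n`; the recurrence for `p` becomes
`A (n + 1) = (X + 1) A n + (X^2 - 1) A n'`. On the basis `(X + 1)^k` this operator acts by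
`(X + 1)^k ↦ (k + 1)(X + 1)^(k + 1) - 2k (X + 1)^k`, so the coefficients `a n k` of `A n` obey
`a (n + 1) (k + 1) = (k + 1)(a n k - 2 a n (k + 1))`. Up to the sign `(-2)^(n - k)` this is the
recurrence `s(n + 1, k + 1) = (k + 1)(s(n, k + 1) + s(n, k))` for the number of surjections:
a surjection on `Fin (n + 1)` is its value `i` at `0` together with a map on the other points
that is either surjective or has range exactly `{i}ᶜ`.
-/

open Function

theorem Set.insert_eq_univ_iff {α : Type*} {a : α} {s : Set α} :
    insert a s = univ ↔ s = univ ∨ s = {a}ᶜ := by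
  rw [← singleton_union, ← compl_subset_iff_union, compl_subset_comm, subset_singleton_iff_eq,
    compl_empty_iff]
  exact or_congr_right (compl_eq_comm.trans eq_comm)

section Surjections

variable {n k : ℕ}

theorem Fin.surjective_cons_iff {i : Fin (k + 1)} {g : Fin n → Fin (k + 1)} :
    Surjective (Fin.cons i g : Fin (n + 1) → Fin (k + 1)) ↔
      Surjective g ∨ Set.range g = {i}ᶜ := by
  rw [← Set.range_eq_univ, Fin.range_cons, Set.insert_eq_univ_iff, Set.range_eq_univ]

theorem Fin.range_succAbove_comp_eq_compl_iff (i : Fin (k + 1)) (h : Fin n → Fin k) :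
    Set.range (i.succAbove ∘ h) = {i}ᶜ ↔ Surjective h := by
  rw [Set.range_comp, ← Fin.range_succAbove, ← Set.image_univ (f := i.succAbove),
    (Set.image_injective.2 Fin.succAbove_right_injective).eq_iff, Set.range_eq_univ]

theorem Fin.card_range_eq_compl_eq_card_surjective (i : Fin (k + 1)) :
    Fintype.card {g : Fin n → Fin (k + 1) // Set.range g = {i}ᶜ} =
      Fintype.card {h : Fin n → Fin k // Surjective h} := by
  refine (Fintype.card_of_bijective (f := fun h : {h : Fin n → Fin k // Surjective h} =>
    ⟨i.succAbove ∘ h.1, (range_succAbove_comp_eq_compl_iff i h.1).2 h.2⟩) ⟨?_, ?_⟩).symm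
  · exact fun _ _ heq =>
      Subtype.ext (succAbove_right_injective.comp_left (congrArg Subtype.val heq))
  · rintro ⟨g, hg⟩
    obtain ⟨h, rfl⟩ :=
      Set.range_subset_range_iff_exists_comp.1 (hg.trans (range_succAbove i).symm).subset
    exact ⟨⟨h, (range_succAbove_comp_eq_compl_iff i h).1 hg⟩, rfl⟩

end Surjections

noncomputable def surjCount (n k : ℕ) : ℕ :=
  Fintype.card {f : Fin n → Fin k // Surjective f}

theorem factorial_mul_stirling2 (n k : ℕ) : (k.factorial : ℝ) * stirling2 n k = surjCount n k :=
  mul_div_cancel₀ _ (by positivity)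

theorem surjCount_zero_zero : surjCount 0 0 = 1 :=
  Fintype.card_eq_one_iff.mpr ⟨⟨id, surjective_id⟩, fun _ => Subsingleton.elim _ _⟩

theorem surjCount_succ_zero (n : ℕ) : surjCount (n + 1) 0 = 0 :=
  Fintype.card_eq_zero_iff.mpr ⟨fun f => (f.1 0).elim0⟩

theorem surjCount_eq_zero_of_lt {n k : ℕ} (h : n < k) : surjCount n k = 0 :=
  Fintype.card_eq_zero_iff.mpr
    ⟨fun f => (Fintype.card_le_of_surjective f.1 f.2).not_gt (by simpa using h)⟩

theorem surjCount_succ_succ (n k : ℕ) :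
    surjCount (n + 1) (k + 1) = (k + 1) * (surjCount n (k + 1) + surjCount n k) := by
  have card_cons (i : Fin (k + 1)) :
      Fintype.card {g : Fin n → Fin (k + 1) // Surjective (Fin.cons i g : Fin (n + 1) → _)} =
        surjCount n (k + 1) + surjCount n k := by
    simp only [Fin.surjective_cons_iff]
    rw [Fintype.card_subtype_or_disjoint, Fin.card_range_eq_compl_eq_card_surjective]
    · rfl
    · intro r hsurj hrange g hg
      have hi : i ∈ Set.range g := hsurj g hg i
      exact (hrange g hg ▸ hi) rfl
  let e := (Equiv.subtypeEquivOfSubtype (Fin.consEquiv fun _ => Fin (k + 1))).symm.trans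
    (Equiv.subtypeProdEquivSigmaSubtype fun i g => Surjective (Fin.cons i g : Fin (n + 1) → _))
  rw [surjCount, Fintype.card_congr e, Fintype.card_sigma]
  simp [card_cons]

noncomputable def stirlingCoeff (n k : ℕ) : ℝ := (-2) ^ (n - k) * surjCount n k

theorem stirlingCoeff_succ_zero (n : ℕ) : stirlingCoeff (n + 1) 0 = 0 := by
  simp [stirlingCoeff, surjCount_succ_zero]

theorem stirlingCoeff_succ_self (n : ℕ) : stirlingCoeff n (n + 1) = 0 := by
  simp [stirlingCoeff, surjCount_eq_zero_of_lt n.lt_succ_self]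

theorem stirlingCoeff_succ_succ (n k : ℕ) :
    stirlingCoeff (n + 1) (k + 1) =
      (k + 1) * (stirlingCoeff n k - 2 * stirlingCoeff n (k + 1)) := by
  simp only [stirlingCoeff, Nat.add_sub_add_right, surjCount_succ_succ]
  rcases lt_or_ge k n with hkn | hnk
  · rw [show n - k = n - (k + 1) + 1 by omega]
    push_cast
    ring
  · rw [surjCount_eq_zero_of_lt (Nat.lt_succ_of_le hnk)]
    push_cast
    ring

noncomputable def stirlingSum (n : ℕ) : ℝ[X] :=
  ∑ k ∈ range (n + 1), stirlingCoeff n k • (X + 1) ^ k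

theorem X_add_one_mul_pow_add_derivative (k : ℕ) :
    (X + 1) * (X + 1) ^ k + (X ^ 2 - 1) * derivative ((X + 1) ^ k : ℝ[X]) =
      (k + 1 : ℝ) • (X + 1) ^ (k + 1) - (2 * k : ℝ) • (X + 1) ^ k := by
  rcases k with _ | k
  · simp
  · rw [derivative_pow]
    simp only [derivative_add, derivative_X, derivative_one, add_zero, mul_one,
      Nat.add_sub_cancel, smul_eq_C_mul]
    push_cast
    simp only [map_add, map_mul, map_natCast, map_one, map_ofNat]
    ring

theorem stirlingSum_zero : stirlingSum 0 = 1 := by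
  simp [stirlingSum, stirlingCoeff, surjCount_zero_zero]

theorem stirlingSum_succ (n : ℕ) :
    stirlingSum (n + 1) = (X + 1) * stirlingSum n + (X ^ 2 - 1) * derivative (stirlingSum n) := by
  have shift :
      ∑ k ∈ range (n + 1), (2 * k * stirlingCoeff n k) • (X + 1 : ℝ[X]) ^ k =
        ∑ k ∈ range (n + 1),
          (2 * (k + 1) * stirlingCoeff n (k + 1)) • (X + 1 : ℝ[X]) ^ (k + 1) := by
    rw [sum_range_succ', sum_range_succ (fun k => (2 * (k + 1) * stirlingCoeff n (k + 1)) • _)]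
    simp [stirlingCoeff_succ_self]
  calc stirlingSum (n + 1)
      = ∑ k ∈ range (n + 1), stirlingCoeff (n + 1) (k + 1) • (X + 1 : ℝ[X]) ^ (k + 1) := by
        rw [stirlingSum, sum_range_succ', stirlingCoeff_succ_zero, zero_smul, add_zero]
    _ = ∑ k ∈ range (n + 1), ((k + 1) * stirlingCoeff n k) • (X + 1 : ℝ[X]) ^ (k + 1) -
          ∑ k ∈ range (n + 1), (2 * k * stirlingCoeff n k) • (X + 1 : ℝ[X]) ^ k := by
        rw [shift, ← sum_sub_distrib]
        refine sum_congr rfl fun k _ => ?_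
        rw [stirlingCoeff_succ_succ]
        module
    _ = ∑ k ∈ range (n + 1), stirlingCoeff n k •
          ((X + 1) * (X + 1) ^ k + (X ^ 2 - 1) * derivative ((X + 1) ^ k : ℝ[X])) := by
        rw [← sum_sub_distrib]
        refine sum_congr rfl fun k _ => ?_
        rw [X_add_one_mul_pow_add_derivative]
        module
    _ = (X + 1) * stirlingSum n + (X ^ 2 - 1) * derivative (stirlingSum n) := by
        simp only [stirlingSum, derivative_sum, derivative_smul, mul_sum, ← sum_add_distrib,
          smul_add, mul_smul_comm]

theorem p_succ_eq (n : ℕ) : p (n + 1) = (X - 1) * stirlingSum (n + 1) := by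
  induction n with
  | zero =>
    rw [p, p, stirlingSum_succ, stirlingSum_zero, derivative_X]
    simp only [derivative_one]
    ring
  | succ n ih =>
    rw [p, ih, stirlingSum_succ (n + 1)]
    simp only [derivative_mul, derivative_sub, derivative_X, derivative_one, sub_zero, one_mul]
    ring

theorem p_eq_sum_stirling (n : ℕ) (hn : 1 ≤ n) (x : ℝ) :
    (p n).eval x =
      (x - 1) * ∑ k ∈ Finset.range (n + 1),
        (-2 : ℝ) ^ (n - k) * (k.factorial : ℝ) * stirling2 n k * (x + 1) ^ k := by
  obtain ⟨m, rfl⟩ := Nat.exists_eq_add_of_le' hn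
  simp only [p_succ_eq, stirlingSum, eval_mul, eval_sub, eval_X, eval_one, eval_finsetSum,
    eval_smul, eval_pow, eval_add, smul_eq_mul]
  congr 1
  refine sum_congr rfl fun k _ => ?_
  rw [stirlingCoeff, mul_assoc _ (k.factorial : ℝ), factorial_mul_stirling2]
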